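/- arXiv:2408.13020 — 2 statements merged into one kernel-verified Lean document; each statement's English description precedes it below -/
import Mathlib

section
/- Let n ≥ 1 and let A be an (n+1)×(n+1) complex matrix with rank A = 1 and Tr A = 0 (i.e. A lies in the minimal nilpotent orbit of sl(n+1,ℂ)). Then A² = 0, so exp(A) = 1 + A, and for every 1 ≤ k ≤ n the coefficient of the basis vector e_1 ∧ ⋯ ∧ e_k in the expansion of (⋀^k(exp A))(e_1 ∧ ⋯ ∧ e_k) in the standard wedge basis of ⋀^k(ℂ^{n+1}) equals 1 + Tr(A_{k×k}). (These matrix coefficients are the Hamiltonians of the integrable system on the minimal nilpotent orbit in type A, and Tr(A_{k×k}) are the linear terms of the Gelfand–Zeitlin system.) -/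
open ExteriorAlgebra

/-- The wedge `e_{i₁} ∧ ⋯ ∧ e_{i_k}` of standard basis vectors of `ℂ^N` indexed by the
increasing enumeration of a `k`-element subset `S` of `Fin N`, viewed in the exterior
algebra of `ℂ^N`.  These wedges form the standard basis of the `k`-th exterior power. -/
noncomputable def wedgeOfSubset {N k : ℕ} (S : {S : Finset (Fin N) // S.card = k}) :
    ExteriorAlgebra ℂ (Fin N → ℂ) :=
  ExteriorAlgebra.ιMulti ℂ k fun j : Fin k => Pi.single ((S.1.orderIsoOfFin S.2 j : Fin N)) (1 : ℂ)

/-!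
A rank-one matrix is `A = u wᵀ`; since `Tr A = w ⬝ u = 0`, it squares to zero and the exponential
series stops at `1 + A`. The coefficient of `e_S` in `⋀^k g (e_1 ∧ ⋯ ∧ e_k)` is the minor of `g`
on the rows `S` and the first `k` columns. For `S = {1, …, k}` and `g = 1 + A` this is
`det (1 + A_{k×k})`, and since `A_{k×k} = (u|ₖ)(w|ₖ)ᵀ` still has rank at most one, the matrix
determinant lemma turns it into `1 + Tr A_{k×k}`.
-/

theorem NormedSpace.exp_eq_one_add_of_mul_self_eq_zero {𝔸 : Type*} [Ring 𝔸] [Algebra ℚ 𝔸]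
    [TopologicalSpace 𝔸] [IsTopologicalRing 𝔸] {x : 𝔸} (hx : x * x = 0) :
    NormedSpace.exp x = 1 + x := by
  rw [NormedSpace.exp_eq_tsum_rat]
  dsimp only
  rw [tsum_eq_sum (s := Finset.range 2)]
  · simp [Finset.sum_range_succ]
  · intro m hm
    obtain ⟨j, rfl⟩ : ∃ j, m = j + 2 := ⟨m - 2, by simp at hm; omega⟩
    rw [pow_add, sq, hx, mul_zero, smul_zero]

namespace Matrix

theorem exists_eq_vecMulVec_of_rank_le_one {K m n : Type*} [Field K] [Fintype m] [Fintype n]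
    {A : Matrix m n K} (h : A.rank ≤ 1) : ∃ u v, A = vecMulVec u v := by
  classical
  obtain ⟨u, hu⟩ := finrank_le_one_iff.1 h
  choose v hv using hu
  refine ⟨u, fun j => v ⟨A *ᵥ Pi.single j 1, LinearMap.mem_range_self _ _⟩, ?_⟩
  ext i j
  have := congr_arg (fun x : LinearMap.range A.mulVecLin => (x : m → K) i)
    (hv ⟨A *ᵥ Pi.single j 1, LinearMap.mem_range_self _ _⟩)
  simpa [vecMulVec_apply, mul_comm] using this.symm

theorem vecMulVec_mul_self_eq_zero {α n : Type*} [CommSemiring α] [Fintype n] {u v : n → α}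
    (h : trace (vecMulVec u v) = 0) : vecMulVec u v * vecMulVec u v = 0 := by
  rw [trace_vecMulVec, dotProduct_comm] at h
  rw [vecMulVec_mul_vecMulVec, h, zero_smul]
  ext
  simp [vecMulVec_apply]

theorem submatrix_vecMulVec {α l m n o : Type*} [Mul α] (u : m → α) (v : n → α)
    (f : l → m) (g : o → n) :
    (vecMulVec u v).submatrix f g = vecMulVec (u ∘ f) (v ∘ g) := rfl

theorem det_one_add_vecMulVec {α n : Type*} [CommRing α] [Fintype n] [DecidableEq n]
    (u v : n → α) :
    det (1 + vecMulVec u v) = 1 + trace (vecMulVec u v) := by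
  rw [vecMulVec_eq Unit, det_one_add_replicateCol_mul_replicateRow,
    trace_replicateCol_mul_replicateRow, dotProduct_comm]

end Matrix

theorem Finset.orderEmbOfFin_map_univ {α : Type*} [LinearOrder α] {k : ℕ} (f : Fin k ↪o α)
    (h : (Finset.univ.map f.toEmbedding).card = k) :
    Finset.orderEmbOfFin (Finset.univ.map f.toEmbedding) h = f :=
  (Finset.orderEmbOfFin_unique' h fun x => Finset.mem_map_of_mem _ (Finset.mem_univ x)).symm

/- Mathlib's basis is indexed by `Set.powersetCard`, a type defeq to the subtype below but with a
different `Fintype` instance; reindexing keeps all sums over the statement's index type. -/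
noncomputable def wedgeBasis (N k : ℕ) :
    Module.Basis {S : Finset (Fin N) // S.card = k} ℂ (⋀[ℂ]^k (Fin N → ℂ)) :=
  ((Pi.basisFun ℂ (Fin N)).exteriorPower k).reindex
    (Equiv.subtypeEquivRight fun _ => Set.powersetCard.mem_iff)

theorem coe_wedgeBasis {N k : ℕ} (S : {S : Finset (Fin N) // S.card = k}) :
    (wedgeBasis N k S : ExteriorAlgebra ℂ (Fin N → ℂ)) = wedgeOfSubset S := by
  rw [wedgeBasis, Module.Basis.reindex_apply, exteriorPower.basis_apply,
    exteriorPower.ιMulti_family_apply_coe, ExteriorAlgebra.ιMulti_family, wedgeOfSubset]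
  congr 1
  funext j
  simp [Set.powersetCard.ofFinEmbEquiv_symm_apply]

theorem wedgeBasis_repr_ιMulti {N k : ℕ} (v : Fin k → Fin N → ℂ)
    (S : {S : Finset (Fin N) // S.card = k}) :
    (wedgeBasis N k).repr (exteriorPower.ιMulti ℂ k v) S =
      (Matrix.of fun i j => v i (S.1.orderEmbOfFin S.2 j)).det := by
  rw [wedgeBasis, Module.Basis.repr_reindex_apply, exteriorPower.basis_repr_apply,
    exteriorPower.ιMultiDual_apply_ιMulti]
  simp [Set.powersetCard.ofFinEmbEquiv_symm_apply]

theorem ιMulti_eq_sum_wedgeOfSubset_iff {N k : ℕ} (v : Fin k → Fin N → ℂ)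
    (c : {S : Finset (Fin N) // S.card = k} → ℂ) :
    ιMulti ℂ k v = ∑ S, c S • wedgeOfSubset S ↔
      ∀ S, c S = (Matrix.of fun i j => v i (S.1.orderEmbOfFin S.2 j)).det := by
  have hsum : ∑ S, c S • wedgeOfSubset S =
      ((wedgeBasis N k).equivFun.symm c : ExteriorAlgebra ℂ (Fin N → ℂ)) := by
    simp [Module.Basis.equivFun_symm_apply, coe_wedgeBasis]
  rw [hsum, ← exteriorPower.ιMulti_apply_coe, SetLike.coe_eq_coe, eq_comm,
    LinearEquiv.symm_apply_eq, funext_iff]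
  simp only [Module.Basis.equivFun_apply, wedgeBasis_repr_ιMulti]

/-- Type A: for `A` in the minimal nilpotent orbit of `sl(n+1,ℂ)` (rank one and traceless),
`A² = 0`, hence `exp A = 1 + A`, and for `1 ≤ k ≤ n` the coefficient of `e_1 ∧ ⋯ ∧ e_k`
in the wedge-basis expansion of `⋀^k(exp A)(e_1 ∧ ⋯ ∧ e_k)` equals `1 + Tr(A_{k×k})`,
the linear Gelfand–Zeitlin Hamiltonian. -/
theorem stmt3 {n : ℕ} (A : Matrix (Fin (n + 1)) (Fin (n + 1)) ℂ)
    (hrank : A.rank = 1) (htr : A.trace = 0) :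
    A * A = 0 ∧
    NormedSpace.exp A = 1 + A ∧
    ∀ (k : ℕ) (hk1 : 1 ≤ k) (hkn : k ≤ n),
      (∃ c : {S : Finset (Fin (n + 1)) // S.card = k} → ℂ,
          ExteriorAlgebra.map (Matrix.toLin' (NormedSpace.exp A))
              (ExteriorAlgebra.ιMulti ℂ k fun j : Fin k =>
                Pi.single (Fin.castLE (hkn.trans (Nat.le_succ n)) j) (1 : ℂ)) =
            ∑ S : {S : Finset (Fin (n + 1)) // S.card = k}, c S • wedgeOfSubset S) ∧
      ∀ c : {S : Finset (Fin (n + 1)) // S.card = k} → ℂ,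
        ExteriorAlgebra.map (Matrix.toLin' (NormedSpace.exp A))
            (ExteriorAlgebra.ιMulti ℂ k fun j : Fin k =>
              Pi.single (Fin.castLE (hkn.trans (Nat.le_succ n)) j) (1 : ℂ)) =
          ∑ S : {S : Finset (Fin (n + 1)) // S.card = k}, c S • wedgeOfSubset S →
        c ⟨Finset.map (Fin.castLEOrderEmb (hkn.trans (Nat.le_succ n))).toEmbedding
              Finset.univ, by simp⟩ =
          1 + (A.submatrix (Fin.castLE (hkn.trans (Nat.le_succ n)))
                (Fin.castLE (hkn.trans (Nat.le_succ n)))).trace := by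
  obtain ⟨u, w, rfl⟩ := Matrix.exists_eq_vecMulVec_of_rank_le_one hrank.le
  have hsq := Matrix.vecMulVec_mul_self_eq_zero htr
  have hexp := NormedSpace.exp_eq_one_add_of_mul_self_eq_zero hsq
  refine ⟨hsq, hexp, fun k _ hkn => ?_⟩
  simp_rw [ExteriorAlgebra.map_apply_ιMulti, ιMulti_eq_sum_wedgeOfSubset_iff]
  refine ⟨⟨_, fun _ => rfl⟩, fun c hc => ?_⟩
  rw [hc, Finset.orderEmbOfFin_map_univ (Fin.castLEOrderEmb _), Matrix.submatrix_vecMulVec,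
    ← Matrix.det_one_add_vecMulVec, ← Matrix.det_transpose]
  congr 1
  ext i j
  simp [hexp, Matrix.one_apply, Matrix.vecMulVec_apply, Pi.single_apply, Fin.castLE_inj, eq_comm]
end

section
/- Let N ≥ 1 and for 1 ≤ j ≤ N let P_j denote the N×N diagonal matrix whose first j diagonal entries are 1 and whose remaining entries are 0. For an N×N complex matrix A and 1 ≤ k ≤ N set G_k(A) = Tr(P_k·A)·P_k − P_k·A·P_k. Then for all A and all 1 ≤ k, l ≤ N, Tr( A · (G_k(A)·P_l − P_l·G_k(A)) ) = 0. (G_k(A) is the gradient, with respect to the trace pairing, of the order-2 Gelfand–Zeitlin Hamiltonian g_k(A) = ½((Tr A_{k×k})² − Tr((A_{k×k})²)), and P_l is the gradient of the order-1 Hamiltonian f_l(A) = Tr(A_{l×l}); the displayed expression is the Kirillov–Kostant Poisson bracket {g_k, f_l}(A), so the order-2 and order-1 Gelfand–Zeitlin Hamiltonians Poisson-commute.) -/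
/-!
Since `Tr(A·[X, Q])` is linear in `X`, it suffices to treat the two summands of `G_k(A)`
separately. The scalar one contributes `Tr(A·[P_k, P_l]) = 0` because diagonal matrices commute.
For `P_k A P_k`, commuting `P_k` past `P_l` and cycling the trace identifies
`Tr(A·P_k A P_k·P_l)` with `Tr(A·P_l·P_k A P_k)`.
-/

namespace Matrix

variable {n R : Type*} [Fintype n] [CommRing R]

theorem trace_mul_sandwich_mul_eq_of_commute {P Q : Matrix n n R} (A : Matrix n n R)
    (h : Commute P Q) : (A * (P * A * P * Q)).trace = (A * (Q * (P * A * P))).trace := by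
  calc (A * (P * A * P * Q)).trace
      = (A * P * A * Q * P).trace := by simp only [Matrix.mul_assoc, h.eq]
    _ = (P * A * P * (A * Q)).trace := by rw [trace_mul_comm]; simp only [Matrix.mul_assoc]
    _ = (A * (Q * (P * A * P))).trace := by rw [trace_mul_comm]; simp only [Matrix.mul_assoc]

theorem trace_mul_commutator_smul_sub_sandwich_eq_zero {P Q : Matrix n n R} (A : Matrix n n R)
    (c : R) (h : Commute P Q) :
    (A * ((c • P - P * A * P) * Q - Q * (c • P - P * A * P))).trace = 0 := by
  have hsplit : (c • P - P * A * P) * Q - Q * (c • P - P * A * P)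
      = c • (P * Q - Q * P) - (P * A * P * Q - Q * (P * A * P)) := by
    simp only [Matrix.sub_mul, Matrix.mul_sub, Matrix.smul_mul, Matrix.mul_smul, smul_sub]
    abel
  rw [hsplit, h.eq, sub_self, smul_zero, zero_sub, Matrix.mul_neg, trace_neg, Matrix.mul_sub,
    trace_sub, trace_mul_sandwich_mul_eq_of_commute A h, sub_self, neg_zero]

end Matrix

theorem stmt7_general {N : ℕ} (A : Matrix (Fin N) (Fin N) ℂ)
    (k l : ℕ) :
    let P : ℕ → Matrix (Fin N) (Fin N) ℂ :=
      fun j => Matrix.diagonal fun i => if (i : ℕ) < j then 1 else 0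
    let G : Matrix (Fin N) (Fin N) ℂ := (P k * A).trace • P k - P k * A * P k
    (A * (G * P l - P l * G)).trace = 0 :=
  Matrix.trace_mul_commutator_smul_sub_sandwich_eq_zero A _ (Matrix.commute_diagonal _ _)

/-- Poisson-commutativity of the order-2 and order-1 Gelfand–Zeitlin Hamiltonians:
with `P_j` the diagonal projection onto the first `j` coordinates and
`G_k(A) = Tr(P_k A)·P_k − P_k A P_k` the gradient of the order-2 Hamiltonian,
the Kirillov–Kostant bracket `Tr(A·[G_k(A), P_l])` vanishes for all `A` and `1 ≤ k, l ≤ N`. -/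
theorem stmt7 {N : ℕ} (hN : 1 ≤ N) (A : Matrix (Fin N) (Fin N) ℂ)
    (k l : ℕ) (hk1 : 1 ≤ k) (hkN : k ≤ N) (hl1 : 1 ≤ l) (hlN : l ≤ N) :
    let P : ℕ → Matrix (Fin N) (Fin N) ℂ :=
      fun j => Matrix.diagonal fun i => if (i : ℕ) < j then 1 else 0
    let G : Matrix (Fin N) (Fin N) ℂ := (P k * A).trace • P k - P k * A * P k
    (A * (G * P l - P l * G)).trace = 0 :=
  stmt7_general A k l
end
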